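/- Let a and b be coprime positive integers and let μ ∈ R(a,b). Then there exists a unique partition μ⁰ ∈ D(a,b) that can be obtained from μ by iterating the cyclic-shift map C (i.e., μ⁰ = C^k(μ) for some k ≥ 0), and this μ⁰ satisfies |μ⁰| = |μ| + ml_{b,a}(μ). -/

import Mathlib

/-- `μ : ℕ → ℕ` represents a partition in `R(a,b)`: the value `μ i` is the
`(i+1)`-th part; the parts are weakly decreasing, at most `b`, and zero from
index `a` on (so the Young diagram of `μ` fits in an `a × b` box). -/
def InBox (a b : ℕ) (μ : ℕ → ℕ) : Prop :=
  (∀ i j : ℕ, i ≤ j → μ j ≤ μ i) ∧ μ 0 ≤ b ∧ ∀ i, a ≤ i → μ i = 0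

/-- `μ ∈ D(a,b)`: `μ ∈ R(a,b)` and `a·μ_j ≤ b·(a−j)` for all (1-indexed) `j`;
in terms of the 0-indexed parts this reads `a·μ(i) ≤ b·(a−1−i)`. -/
def InTriangle (a b : ℕ) (μ : ℕ → ℕ) : Prop :=
  InBox a b μ ∧ ∀ i, i < a → a * μ i ≤ b * (a - 1 - i)

/-- The leg of the cell in (0-indexed) row `i`, column `j` of the Young diagram
of `μ`: the number of cells strictly below it in its column. -/
noncomputable def leg (μ : ℕ → ℕ) (i j : ℕ) : ℕ :=
  {i' : ℕ | i < i' ∧ j < μ i'}.ncard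

/-- The arm of the cell in row `i`, column `j` (as an integer): the number of
cells strictly to its right in its row. -/
def armZ (μ : ℕ → ℕ) (i j : ℕ) : ℤ := (μ i : ℤ) - 1 - j

/-- `h⁺_{b,a}(μ)`: the number of cells `c` of `μ` with
`−a < a·arm(c) − b·leg(c) ≤ b`. -/
noncomputable def hplus (a b : ℕ) (μ : ℕ → ℕ) : ℕ :=
  {c : ℕ × ℕ | c.2 < μ c.1 ∧
    -(a : ℤ) < (a : ℤ) * armZ μ c.1 c.2 - (b : ℤ) * leg μ c.1 c.2 ∧
    (a : ℤ) * armZ μ c.1 c.2 - (b : ℤ) * leg μ c.1 c.2 ≤ (b : ℤ)}.ncard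

/-- The frontier of `μ ∈ R(a,b)`: the lattice word from `(0,0)` to `(b,a)`
(`true` = N, `false` = E) tracing the boundary of the diagram of `μ` inside the
`a × b` box; its `j`-th N (from the start) is preceded by exactly `μ_{a+1−j}` E's. -/
def frontierWord (a b : ℕ) (μ : ℕ → ℕ) : List Bool :=
  ((List.range a).flatMap fun y =>
    List.replicate (μ (a - 1 - y) - μ (a - y)) false ++ [true]) ++
  List.replicate (b - μ 0) false

/-- The level `l_i = b·(#N) − a·(#E)` of the lattice point reached after the
first `i` steps of the word `w` (with `true` = N, `false` = E). -/
def levelAt (a b : ℕ) (w : List Bool) (i : ℕ) : ℤ :=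
  (b : ℤ) * (w.take i).count true - (a : ℤ) * (w.take i).count false

/-- `ml_{b,a}`: the minimum of the levels `l_0, l_1, …, l_{length w}` along `w`. -/
def minLevel (a b : ℕ) (w : List Bool) : ℤ :=
  ((Finset.range (w.length + 1)).image fun i => levelAt a b w i).min'
    (Finset.Nonempty.image Finset.nonempty_range_add_one _)

/-- The cyclic-shift relation: `CRel a b μ ν` holds iff `ν = C(μ)`, i.e. `ν` is
the (unique) partition in `R(a,b)` whose frontier is the frontier of `μ`
cyclically shifted by one step. -/
def CRel (a b : ℕ) (μ ν : ℕ → ℕ) : Prop :=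
  InBox a b ν ∧ frontierWord a b ν = (frontierWord a b μ).rotate 1

/-!
Rotating a closed word by `k` lowers all its levels by `l_k`, and a partition lies in `D(a,b)`
exactly when no level of its frontier is negative. Hence `C^k(μ)` lies in `D(a,b)` iff `l_k` is
the minimal level of the frontier of `μ`. Since `l_i ≡ -a·i` modulo `a + b`, for coprime `a, b`
the levels `l_0, …, l_{a+b-1}` are distinct, so this happens for exactly one `k` modulo `a + b`.
Finally one step of `C` changes `|μ|` by `l_1` and `ml` by `-l_1`, and `ml` vanishes on `D(a,b)`.
-/

section Levels

variable {a b : ℕ}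

@[simp] lemma levelAt_zero (w : List Bool) : levelAt a b w 0 = 0 := by
  simp [levelAt]

lemma levelAt_eq {w : List Bool} {i : ℕ} (hi : i ≤ w.length) :
    levelAt a b w i = ((a : ℤ) + b) * (w.take i).count true - a * i := by
  have hcount := List.count_true_add_count_false (w.take i)
  rw [List.length_take_of_le hi] at hcount
  rw [levelAt, show ((w.take i).count false : ℤ) = i - (w.take i).count true by omega]
  ring

lemma levelAt_length {w : List Bool} (hT : w.count true = a) (hF : w.count false = b) :
    levelAt a b w w.length = 0 := by
  rw [levelAt, List.take_length, hT, hF]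
  ring

lemma levelAt_rotate {w : List Bool} {k i : ℕ} (hki : k + i ≤ w.length) :
    levelAt a b (w.rotate k) i = levelAt a b w (k + i) - levelAt a b w k := by
  have htake : (w.rotate k).take i = (w.take (k + i)).drop k := by
    rw [List.rotate_eq_drop_append_take (by omega),
      List.take_append_of_le_length (by rw [List.length_drop]; omega), List.take_drop]
  have hcount (c : Bool) :
      (w.take (k + i)).count c = (w.take k).count c + ((w.take (k + i)).drop k).count c := by
    conv_lhs => rw [← List.take_append_drop k (w.take (k + i))]
    rw [List.count_append, List.take_take, min_eq_left (by omega)]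
  rw [levelAt, levelAt, levelAt, htake, hcount true, hcount false]
  push_cast
  ring

lemma levelAt_rotate_wrap {w : List Bool} (hT : w.count true = a) (hF : w.count false = b)
    {k j : ℕ} (hk : k ≤ w.length) (hj : j ≤ k) :
    levelAt a b (w.rotate k) (w.length - k + j) = levelAt a b w j - levelAt a b w k := by
  have hback : (w.rotate k).rotate (w.length - k) = w := by
    rw [List.rotate_rotate, Nat.add_sub_cancel' hk, List.rotate_length]
  have hlen : (w.rotate k).length = w.length := List.length_rotate w k
  have hwrap := levelAt_rotate (a := a) (b := b) (w := w.rotate k) (k := w.length - k) (i := j)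
    (by omega)
  have hmid := levelAt_rotate (a := a) (b := b) (w := w) (k := k) (i := w.length - k) (by omega)
  rw [hback] at hwrap
  rw [Nat.add_sub_cancel' hk, levelAt_length hT hF] at hmid
  linarith

lemma minLevel_le_levelAt {w : List Bool} {i : ℕ} (hi : i ≤ w.length) :
    minLevel a b w ≤ levelAt a b w i :=
  Finset.min'_le _ _ (Finset.mem_image_of_mem _ (Finset.mem_range.mpr (by omega)))

lemma exists_levelAt_eq_minLevel (w : List Bool) :
    ∃ i ≤ w.length, levelAt a b w i = minLevel a b w := by
  obtain ⟨i, hi, hmin⟩ := Finset.mem_image.mp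
    (Finset.min'_mem ((Finset.range (w.length + 1)).image (levelAt a b w)) _)
  exact ⟨i, Nat.lt_succ_iff.mp (Finset.mem_range.mp hi), hmin⟩

lemma exists_lt_length_levelAt_eq_minLevel {w : List Bool} (hT : w.count true = a)
    (hF : w.count false = b) (hw : w ≠ []) :
    ∃ i < w.length, levelAt a b w i = minLevel a b w := by
  obtain ⟨i, hi, hmin⟩ := exists_levelAt_eq_minLevel (a := a) (b := b) w
  rcases hi.lt_or_eq with hlt | rfl
  · exact ⟨i, hlt, hmin⟩
  · exact ⟨0, List.length_pos_iff.mpr hw, by rw [← hmin, levelAt_length hT hF, levelAt_zero]⟩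

lemma minLevel_rotate {w : List Bool} (hT : w.count true = a) (hF : w.count false = b)
    {k : ℕ} (hk : k ≤ w.length) :
    minLevel a b (w.rotate k) = minLevel a b w - levelAt a b w k := by
  have hlen : (w.rotate k).length = w.length := List.length_rotate w k
  apply le_antisymm
  · obtain ⟨j, hj, hmin⟩ := exists_levelAt_eq_minLevel (a := a) (b := b) w
    rw [← hmin]
    rcases le_total k j with hkj | hjk
    · rw [← Nat.add_sub_cancel' hkj, ← levelAt_rotate (by omega)]
      exact minLevel_le_levelAt (by omega)
    · rw [← levelAt_rotate_wrap hT hF hk hjk]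
      exact minLevel_le_levelAt (by omega)
  · obtain ⟨i, hi, hmin⟩ := exists_levelAt_eq_minLevel (a := a) (b := b) (w.rotate k)
    rw [← hmin]
    rcases le_total i (w.length - k) with hik | hki
    · rw [levelAt_rotate (by omega)]
      linarith [minLevel_le_levelAt (a := a) (b := b) (w := w) (i := k + i) (by omega)]
    · rw [← Nat.add_sub_cancel' hki, levelAt_rotate_wrap hT hF hk (by omega)]
      linarith [minLevel_le_levelAt (a := a) (b := b) (w := w) (i := i - (w.length - k))
        (by omega)]

lemma eq_of_levelAt_eq (hab : Nat.Coprime a b) {w : List Bool} (hT : w.count true = a)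
    (hF : w.count false = b) {k k' : ℕ} (hk : k < a + b) (hk' : k' < a + b)
    (h : levelAt a b w k = levelAt a b w k') : k = k' := by
  have hlen : w.length = a + b := by rw [← List.count_true_add_count_false, hT, hF]
  rw [levelAt_eq (by omega), levelAt_eq (by omega)] at h
  have hdvd : ((a : ℤ) + b) ∣ a * ((k : ℤ) - k') :=
    ⟨((w.take k).count true : ℤ) - (w.take k').count true, by linear_combination -h⟩
  have hcop : IsCoprime ((a : ℤ) + b) a := by
    rw [show ((a : ℤ) + b) = ((a + b : ℕ) : ℤ) by push_cast; ring, Nat.isCoprime_iff_coprime,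
      Nat.coprime_self_add_left]
    exact hab.symm
  have hdvd' : ((a : ℤ) + b) ∣ (k : ℤ) - k' := hcop.dvd_of_dvd_mul_left hdvd
  by_contra hne
  have := Int.natAbs_le_of_dvd_ne_zero hdvd' (by omega)
  omega

end Levels

section Frontier

variable {a b : ℕ} {μ ν : ℕ → ℕ}

def frontierSegment (a : ℕ) (μ : ℕ → ℕ) (y : ℕ) : List Bool :=
  List.replicate (μ (a - 1 - y) - μ (a - y)) false ++ [true]

def frontierPrefix (a : ℕ) (μ : ℕ → ℕ) (k : ℕ) : List Bool :=
  (List.range k).flatMap (frontierSegment a μ)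

lemma frontierWord_eq (a b : ℕ) (μ : ℕ → ℕ) :
    frontierWord a b μ = frontierPrefix a μ a ++ List.replicate (b - μ 0) false :=
  rfl

lemma frontierPrefix_succ (a : ℕ) (μ : ℕ → ℕ) (k : ℕ) :
    frontierPrefix a μ (k + 1) = frontierPrefix a μ k ++ frontierSegment a μ k := by
  simp [frontierPrefix, List.range_succ]

lemma frontierPrefix_succ' (a : ℕ) (μ : ℕ → ℕ) (k : ℕ) :
    frontierPrefix a μ (k + 1) =
      frontierSegment a μ 0 ++ (List.range k).flatMap (fun y => frontierSegment a μ (y + 1)) := by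
  rw [frontierPrefix, List.range_succ_eq_map, List.flatMap_cons, List.flatMap_map]

lemma count_true_frontierPrefix (a : ℕ) (μ : ℕ → ℕ) (k : ℕ) :
    (frontierPrefix a μ k).count true = k := by
  induction k with
  | zero => rfl
  | succ k ih => simp [frontierPrefix_succ, frontierSegment, ih, List.count_replicate]

lemma count_false_frontierPrefix (hμ : InBox a b μ) {k : ℕ} (hk : k ≤ a) :
    (frontierPrefix a μ k).count false = μ (a - k) := by
  induction k with
  | zero => simp [frontierPrefix, hμ.2.2 a le_rfl]
  | succ k ih =>
    have hmono : μ (a - k) ≤ μ (a - 1 - k) := hμ.1 _ _ (by omega)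
    rw [frontierPrefix_succ, List.count_append, ih (by omega),
      show a - (k + 1) = a - 1 - k by omega]
    simp [frontierSegment]
    omega

lemma length_frontierPrefix (hμ : InBox a b μ) {k : ℕ} (hk : k ≤ a) :
    (frontierPrefix a μ k).length = k + μ (a - k) := by
  rw [← List.count_true_add_count_false, count_true_frontierPrefix,
    count_false_frontierPrefix hμ hk]

lemma frontierPrefix_isPrefix {k : ℕ} (hk : k ≤ a) :
    frontierPrefix a μ k <+: frontierWord a b μ := by
  have hmono : ∀ m, k ≤ m → frontierPrefix a μ k <+: frontierPrefix a μ m := by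
    intro m hm
    induction m, hm using Nat.le_induction with
    | base => exact List.prefix_refl _
    | succ m _ ih => exact ih.trans (by rw [frontierPrefix_succ]; exact List.prefix_append _ _)
  exact (hmono a hk).trans (List.prefix_append _ _)

lemma count_true_frontierWord : (frontierWord a b μ).count true = a := by
  simp [frontierWord_eq, count_true_frontierPrefix, List.count_replicate]

lemma count_false_frontierWord (hμ : InBox a b μ) : (frontierWord a b μ).count false = b := by
  have := hμ.2.1
  simp [frontierWord_eq, count_false_frontierPrefix hμ le_rfl]
  omega

lemma length_frontierWord (hμ : InBox a b μ) : (frontierWord a b μ).length = a + b := by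
  rw [← List.count_true_add_count_false, count_true_frontierWord, count_false_frontierWord hμ]

/-- The `(k+1)`-th N of the frontier sits at position `k + μ (a - 1 - k)`. -/
lemma take_frontierWord_succ_corner (hμ : InBox a b μ) {k : ℕ} (hk : k < a) :
    (frontierWord a b μ).take (k + μ (a - 1 - k) + 1) = frontierPrefix a μ (k + 1) := by
  have hlen : (frontierPrefix a μ (k + 1)).length = k + μ (a - 1 - k) + 1 := by
    rw [length_frontierPrefix hμ hk, show a - (k + 1) = a - 1 - k by omega]
    omega
  rw [← hlen, ← List.prefix_iff_eq_take.mp (frontierPrefix_isPrefix hk)]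

lemma take_frontierWord_corner (hμ : InBox a b μ) {k : ℕ} (hk : k < a) :
    (frontierWord a b μ).take (k + μ (a - 1 - k)) =
      frontierPrefix a μ k ++ List.replicate (μ (a - 1 - k) - μ (a - k)) false := by
  have hmono : μ (a - k) ≤ μ (a - 1 - k) := hμ.1 _ _ (by omega)
  rw [← min_eq_left (Nat.le_succ (k + μ (a - 1 - k))), ← List.take_take,
    take_frontierWord_succ_corner hμ hk, frontierPrefix_succ, frontierSegment,
    ← List.append_assoc, List.take_left']
  simp only [List.length_append, List.length_replicate, length_frontierPrefix hμ hk.le]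
  omega

lemma lt_count_true_take_frontierWord_iff (hμ : InBox a b μ) {k : ℕ} (hk : k < a) (n : ℕ) :
    k < ((frontierWord a b μ).take n).count true ↔ k + μ (a - 1 - k) < n := by
  constructor
  · intro hlt
    by_contra! hn
    have hle := (List.take_prefix_take_left (l := frontierWord a b μ) hn).count_le true
    rw [take_frontierWord_corner hμ hk] at hle
    simp [count_true_frontierPrefix, List.count_replicate] at hle
    omega
  · intro hn
    have hle := (List.take_prefix_take_left (l := frontierWord a b μ) hn).count_le true
    rw [take_frontierWord_succ_corner hμ hk, count_true_frontierPrefix] at hle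
    omega

lemma levelAt_frontierWord_corner (hμ : InBox a b μ) {k : ℕ} (hk : k < a) :
    levelAt a b (frontierWord a b μ) (k + μ (a - 1 - k)) =
      (b : ℤ) * k - a * μ (a - 1 - k) := by
  have hmono : μ (a - k) ≤ μ (a - 1 - k) := hμ.1 _ _ (by omega)
  rw [levelAt, take_frontierWord_corner hμ hk]
  simp [count_true_frontierPrefix, count_false_frontierPrefix hμ hk.le, List.count_replicate]
  omega

lemma eq_of_frontierWord_eq (hμ : InBox a b μ) (hν : InBox a b ν)
    (h : frontierWord a b μ = frontierWord a b ν) : μ = ν := by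
  funext i
  rcases lt_or_ge i a with hi | hi
  · have hcorner (n : ℕ) :
        a - 1 - i + μ (a - 1 - (a - 1 - i)) < n ↔ a - 1 - i + ν (a - 1 - (a - 1 - i)) < n := by
      rw [← lt_count_true_take_frontierWord_iff hμ (by omega),
        ← lt_count_true_take_frontierWord_iff hν (by omega), h]
    rw [show a - 1 - (a - 1 - i) = i by omega] at hcorner
    have h₁ := (hcorner (a - 1 - i + μ i + 1)).1 (by omega)
    have h₂ := (hcorner (a - 1 - i + ν i + 1)).2 (by omega)
    omega
  · rw [hμ.2.2 i hi, hν.2.2 i hi]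

lemma levelAt_frontierWord_nonneg (hμ : InTriangle a b μ) {i : ℕ}
    (hi : i ≤ (frontierWord a b μ).length) : 0 ≤ levelAt a b (frontierWord a b μ) i := by
  set t := ((frontierWord a b μ).take i).count true with ht
  have hta : t ≤ a := ((List.take_prefix _ _).count_le true).trans_eq count_true_frontierWord
  rw [levelAt_eq hi, ← ht]
  rcases hta.lt_or_eq with hlt | hta
  · have hiμ : i ≤ t + μ (a - 1 - t) := by
      have := (lt_count_true_take_frontierWord_iff hμ.1 hlt i).not.mp (lt_irrefl t)
      omega
    have htri : (a : ℤ) * μ (a - 1 - t) ≤ b * t := by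
      have := hμ.2 (a - 1 - t) (by omega)
      rw [show a - 1 - (a - 1 - t) = t by omega] at this
      exact_mod_cast this
    have : (a : ℤ) * i ≤ a * (t + μ (a - 1 - t)) := by gcongr; exact_mod_cast hiμ
    linarith
  · have : (a : ℤ) * i ≤ a * (a + b) := by
      gcongr; exact_mod_cast (length_frontierWord hμ.1 ▸ hi)
    rw [hta]
    linarith

lemma inTriangle_iff_minLevel_eq_zero (hμ : InBox a b μ) :
    InTriangle a b μ ↔ minLevel a b (frontierWord a b μ) = 0 := by
  constructor
  · intro htri
    obtain ⟨i, hi, hmin⟩ := exists_levelAt_eq_minLevel (a := a) (b := b) (frontierWord a b μ)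
    have hle := minLevel_le_levelAt (a := a) (b := b) (Nat.zero_le (frontierWord a b μ).length)
    rw [levelAt_zero] at hle
    linarith [levelAt_frontierWord_nonneg htri hi]
  · refine fun hmin => ⟨hμ, fun i hi => ?_⟩
    have hcorner := levelAt_frontierWord_corner hμ (k := a - 1 - i) (by omega)
    have hle := minLevel_le_levelAt (a := a) (b := b) (w := frontierWord a b μ)
      (i := a - 1 - i + μ (a - 1 - (a - 1 - i))) (by
        have := (hμ.1 0 i (Nat.zero_le i)).trans hμ.2.1
        rw [length_frontierWord hμ, show a - 1 - (a - 1 - i) = i by omega]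
        omega)
    rw [show a - 1 - (a - 1 - i) = i by omega] at hcorner hle
    rw [hcorner, hmin] at hle
    exact_mod_cast (by linarith : (a : ℤ) * μ i ≤ b * (a - 1 - i : ℕ))

end Frontier

section CyclicShift

variable {a b : ℕ} {μ : ℕ → ℕ}

/-- The map `C`. If `μ` has `a` nonzero parts, its frontier starts with E and `C` removes the
first column; otherwise it starts with N and `C` adds a row of length `b` on top. -/
def cyclicShift (a b : ℕ) (μ : ℕ → ℕ) : ℕ → ℕ :=
  if μ (a - 1) = 0 then fun i => if i = 0 then b else μ (i - 1) else fun i => μ i - 1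

lemma inBox_cyclicShift (ha : 0 < a) (hμ : InBox a b μ) : InBox a b (cyclicShift a b μ) := by
  obtain ⟨hmono, hb, hzero⟩ := hμ
  unfold cyclicShift
  split_ifs with hlast
  · refine ⟨fun i j hij => ?_, by simp, fun i hi => ?_⟩
    · rcases Nat.eq_zero_or_pos i with rfl | hi
      · by_cases hj : j = 0 <;> simp [hj, (hmono 0 (j - 1) (Nat.zero_le _)).trans hb]
      · simp only [show i ≠ 0 by omega, show j ≠ 0 by omega, if_false]
        exact hmono _ _ (by omega)
    · simp only [show i ≠ 0 by omega, if_false]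
      exact Nat.eq_zero_of_le_zero (hlast ▸ hmono _ _ (by omega))
  · exact ⟨fun i j hij => Nat.sub_le_sub_right (hmono i j hij) 1, by simp; omega,
      fun i hi => by simp [hzero i hi]⟩

lemma frontierWord_of_last_eq_zero (ha : 0 < a) (hμ : InBox a b μ) (hlast : μ (a - 1) = 0) :
    ∃ t, frontierWord a b μ = true :: t ∧
      frontierWord a b (cyclicShift a b μ) = t ++ [true] := by
  obtain ⟨a, rfl⟩ : ∃ a', a = a' + 1 := ⟨a - 1, by omega⟩
  rw [Nat.add_sub_cancel] at hlast
  have hν (i : ℕ) : cyclicShift (a + 1) b μ i = if i = 0 then b else μ (i - 1) := by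
    simp [cyclicShift, hlast]
  have hsegment : ∀ y ∈ List.range a,
      frontierSegment (a + 1) (cyclicShift (a + 1) b μ) y =
        frontierSegment (a + 1) μ (y + 1) := by
    intro y hy
    have hy := List.mem_range.mp hy
    simp only [frontierSegment, hν, show a + 1 - 1 - y ≠ 0 by omega,
      show a + 1 - y ≠ 0 by omega, if_false]
    rw [show a + 1 - 1 - y - 1 = a + 1 - 1 - (y + 1) by omega,
      show a + 1 - y - 1 = a + 1 - (y + 1) by omega]
  refine ⟨(List.range a).flatMap (fun y => frontierSegment (a + 1) μ (y + 1)) ++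
    List.replicate (b - μ 0) false, ?_, ?_⟩
  · rw [frontierWord_eq, frontierPrefix_succ']
    simp [frontierSegment, hlast, hμ.2.2 (a + 1) le_rfl]
  · rw [frontierWord_eq, frontierPrefix_succ, frontierPrefix, List.flatMap_congr hsegment]
    simp [frontierSegment, hν]

lemma frontierWord_of_last_ne_zero (ha : 0 < a) (hμ : InBox a b μ) (hlast : μ (a - 1) ≠ 0) :
    ∃ t, frontierWord a b μ = false :: t ∧
      frontierWord a b (cyclicShift a b μ) = t ++ [false] := by
  obtain ⟨a, rfl⟩ : ∃ a', a = a' + 1 := ⟨a - 1, by omega⟩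
  rw [Nat.add_sub_cancel] at hlast
  have hν (i : ℕ) : cyclicShift (a + 1) b μ i = μ i - 1 := by
    simp [cyclicShift, hlast]
  have hpos (i : ℕ) (hi : i ≤ a) : 1 ≤ μ i :=
    (Nat.one_le_iff_ne_zero.mpr hlast).trans (hμ.1 i a hi)
  have hsegment : ∀ y ∈ List.range a,
      frontierSegment (a + 1) (cyclicShift (a + 1) b μ) (y + 1) =
        frontierSegment (a + 1) μ (y + 1) := by
    intro y hy
    have hy := List.mem_range.mp hy
    have := hpos (a + 1 - (y + 1)) (by omega)
    have := hpos (a + 1 - 1 - (y + 1)) (by omega)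
    simp only [frontierSegment, hν]
    congr 2
    omega
  refine ⟨List.replicate (μ a - 1) false ++ [true] ++
    (List.range a).flatMap (fun y => frontierSegment (a + 1) μ (y + 1)) ++
    List.replicate (b - μ 0) false, ?_, ?_⟩
  · have hμa : μ a = μ a - 1 + 1 := by omega
    rw [frontierWord_eq, frontierPrefix_succ', frontierSegment]
    simp only [Nat.add_sub_cancel, Nat.sub_zero, hμ.2.2 (a + 1) le_rfl]
    rw [hμa, List.replicate_succ]
    simp
  · have hb : b - (μ 0 - 1) = b - μ 0 + 1 := by
      have := hpos 0 (Nat.zero_le a)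
      have := hμ.2.1
      omega
    rw [frontierWord_eq, frontierPrefix_succ', List.flatMap_congr hsegment, frontierSegment, hν,
      hν 0, Nat.add_sub_cancel, hb, List.replicate_succ']
    simp [hν, hμ.2.2 (a + 1) le_rfl]

lemma frontierWord_cyclicShift (ha : 0 < a) (hμ : InBox a b μ) :
    frontierWord a b (cyclicShift a b μ) = (frontierWord a b μ).rotate 1 := by
  by_cases hlast : μ (a - 1) = 0
  · obtain ⟨t, hμt, hνt⟩ := frontierWord_of_last_eq_zero ha hμ hlast
    simp [hμt, hνt]
  · obtain ⟨t, hμt, hνt⟩ := frontierWord_of_last_ne_zero ha hμ hlast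
    simp [hμt, hνt]

lemma sum_cyclicShift (ha : 0 < a) (hμ : InBox a b μ) :
    ∑ i ∈ Finset.range a, (cyclicShift a b μ i : ℤ) =
      ∑ i ∈ Finset.range a, (μ i : ℤ) + levelAt a b (frontierWord a b μ) 1 := by
  obtain ⟨a, rfl⟩ : ∃ a', a = a' + 1 := ⟨a - 1, by omega⟩
  by_cases hlast : μ (a + 1 - 1) = 0
  · obtain ⟨t, hμt, -⟩ := frontierWord_of_last_eq_zero ha hμ hlast
    rw [Nat.add_sub_cancel] at hlast
    rw [hμt, Finset.sum_range_succ', Finset.sum_range_succ]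
    simp [cyclicShift, hlast, levelAt]
  · obtain ⟨t, hμt, -⟩ := frontierWord_of_last_ne_zero ha hμ hlast
    rw [Nat.add_sub_cancel] at hlast
    have hpos : ∀ i ∈ Finset.range (a + 1), 1 ≤ μ i := fun i hi =>
      (Nat.one_le_iff_ne_zero.mpr hlast).trans
        (hμ.1 i a (Nat.lt_succ_iff.mp (Finset.mem_range.mp hi)))
    rw [hμt]
    simp [cyclicShift, hlast, levelAt,
      Finset.sum_congr rfl (fun i hi => Nat.cast_sub (hpos i hi))]
    ring

end CyclicShift

section Iterate

variable {a b : ℕ} {μ : ℕ → ℕ}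

lemma inBox_iterate_cyclicShift (ha : 0 < a) (hμ : InBox a b μ) (k : ℕ) :
    InBox a b ((cyclicShift a b)^[k] μ) := by
  induction k with
  | zero => exact hμ
  | succ k ih => rw [Function.iterate_succ_apply']; exact inBox_cyclicShift ha ih

lemma frontierWord_iterate_cyclicShift (ha : 0 < a) (hμ : InBox a b μ) (k : ℕ) :
    frontierWord a b ((cyclicShift a b)^[k] μ) = (frontierWord a b μ).rotate k := by
  induction k with
  | zero => simp
  | succ k ih =>
    rw [Function.iterate_succ_apply',
      frontierWord_cyclicShift ha (inBox_iterate_cyclicShift ha hμ k), ih, List.rotate_rotate]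

lemma iterate_cyclicShift_mod (ha : 0 < a) (hμ : InBox a b μ) (k : ℕ) :
    (cyclicShift a b)^[k % (a + b)] μ = (cyclicShift a b)^[k] μ := by
  apply eq_of_frontierWord_eq (inBox_iterate_cyclicShift ha hμ _)
    (inBox_iterate_cyclicShift ha hμ _)
  rw [frontierWord_iterate_cyclicShift ha hμ, frontierWord_iterate_cyclicShift ha hμ,
    ← length_frontierWord hμ, List.rotate_mod]

lemma cRel_iff (ha : 0 < a) (hμ : InBox a b μ) {ν : ℕ → ℕ} :
    CRel a b μ ν ↔ ν = cyclicShift a b μ := by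
  constructor
  · exact fun h => eq_of_frontierWord_eq h.1 (inBox_cyclicShift ha hμ)
      (h.2.trans (frontierWord_cyclicShift ha hμ).symm)
  · rintro rfl
    exact ⟨inBox_cyclicShift ha hμ, frontierWord_cyclicShift ha hμ⟩

lemma reflTransGen_cRel_iff (ha : 0 < a) (hμ : InBox a b μ) {ν : ℕ → ℕ} :
    Relation.ReflTransGen (CRel a b) μ ν ↔ ∃ k, ν = (cyclicShift a b)^[k] μ := by
  constructor
  · intro h
    induction h with
    | refl => exact ⟨0, rfl⟩
    | tail _ hstep ih =>
      obtain ⟨k, rfl⟩ := ih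
      refine ⟨k + 1, ?_⟩
      rw [Function.iterate_succ_apply', ← cRel_iff ha (inBox_iterate_cyclicShift ha hμ k)]
      exact hstep
  · rintro ⟨k, rfl⟩
    induction k with
    | zero => exact Relation.ReflTransGen.refl
    | succ k ih =>
      rw [Function.iterate_succ_apply']
      exact ih.tail ((cRel_iff ha (inBox_iterate_cyclicShift ha hμ k)).mpr rfl)

/-- `|μ| + ml_{b,a}(μ)` is invariant under `C`: both terms change by the level `l_1`. -/
lemma sum_iterate_cyclicShift_add_minLevel (ha : 0 < a) (hμ : InBox a b μ) (k : ℕ) :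
    ∑ i ∈ Finset.range a, ((cyclicShift a b)^[k] μ i : ℤ) +
        minLevel a b (frontierWord a b ((cyclicShift a b)^[k] μ)) =
      ∑ i ∈ Finset.range a, (μ i : ℤ) + minLevel a b (frontierWord a b μ) := by
  induction k with
  | zero => rfl
  | succ k ih =>
    have hk := inBox_iterate_cyclicShift ha hμ k
    rw [Function.iterate_succ_apply', sum_cyclicShift ha hk, frontierWord_cyclicShift ha hk,
      minLevel_rotate count_true_frontierWord (count_false_frontierWord hk)
        (by rw [length_frontierWord hk]; omega), ← ih]
    ring

end Iterate

theorem stmt17_general (a b : ℕ) (ha : 0 < a) (hab : Nat.Coprime a b)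
    (μ : ℕ → ℕ) (hμ : InBox a b μ) :
    (∃! ν : ℕ → ℕ, InTriangle a b ν ∧ Relation.ReflTransGen (CRel a b) μ ν) ∧
    (∀ ν : ℕ → ℕ, InTriangle a b ν → Relation.ReflTransGen (CRel a b) μ ν →
      (∑ t ∈ Finset.range a, (ν t : ℤ)) =
        (∑ t ∈ Finset.range a, (μ t : ℤ)) + minLevel a b (frontierWord a b μ)) := by
  set w := frontierWord a b μ
  have hT : w.count true = a := count_true_frontierWord
  have hF : w.count false = b := count_false_frontierWord hμ
  have hlen : w.length = a + b := length_frontierWord hμ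
  have htri (k : ℕ) : InTriangle a b ((cyclicShift a b)^[k] μ) ↔
      levelAt a b w (k % (a + b)) = minLevel a b w := by
    rw [inTriangle_iff_minLevel_eq_zero (inBox_iterate_cyclicShift ha hμ k),
      frontierWord_iterate_cyclicShift ha hμ, ← List.rotate_mod, hlen,
      minLevel_rotate hT hF (by rw [hlen]; exact (Nat.mod_lt _ (by omega)).le)]
    constructor <;> intro h <;> linarith
  obtain ⟨m, hm, hmin⟩ := exists_lt_length_levelAt_eq_minLevel hT hF
    (List.ne_nil_of_length_pos (by omega))
  rw [hlen] at hm
  refine ⟨⟨(cyclicShift a b)^[m] μ, ⟨(htri m).mpr (by rwa [Nat.mod_eq_of_lt hm]),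
    (reflTransGen_cRel_iff ha hμ).mpr ⟨m, rfl⟩⟩, ?_⟩, ?_⟩
  · rintro ν ⟨hν, hreach⟩
    obtain ⟨k, rfl⟩ := (reflTransGen_cRel_iff ha hμ).mp hreach
    have hkm : k % (a + b) = m :=
      eq_of_levelAt_eq hab hT hF (Nat.mod_lt _ (by omega)) hm (((htri k).mp hν).trans hmin.symm)
    rw [← iterate_cyclicShift_mod ha hμ, hkm]
  · rintro ν hν hreach
    obtain ⟨k, rfl⟩ := (reflTransGen_cRel_iff ha hμ).mp hreach
    have hinv := sum_iterate_cyclicShift_add_minLevel ha hμ k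
    rw [(inTriangle_iff_minLevel_eq_zero (inBox_iterate_cyclicShift ha hμ k)).mp hν] at hinv
    linarith

/-- for coprime positive `a, b` and `μ ∈ R(a,b)`, there is a
unique `μ⁰ ∈ D(a,b)` obtainable from `μ` by iterating the cyclic-shift map `C`
(i.e. with `Relation.ReflTransGen (CRel a b) μ μ⁰`), and every such `μ⁰`
satisfies `|μ⁰| = |μ| + ml_{b,a}(μ)`. -/
theorem stmt17 (a b : ℕ) (ha : 0 < a) (hb : 0 < b) (hab : Nat.Coprime a b)
    (μ : ℕ → ℕ) (hμ : InBox a b μ) :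
    (∃! ν : ℕ → ℕ, InTriangle a b ν ∧ Relation.ReflTransGen (CRel a b) μ ν) ∧
    (∀ ν : ℕ → ℕ, InTriangle a b ν → Relation.ReflTransGen (CRel a b) μ ν →
      (∑ t ∈ Finset.range a, (ν t : ℤ)) =
        (∑ t ∈ Finset.range a, (μ t : ℤ)) + minLevel a b (frontierWord a b μ)) :=
  stmt17_general a b ha hab μ hμ
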